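/- arXiv:1301.5829 — 4 statements merged into one kernel-verified Lean document; each statement's English description precedes it below -/
import Mathlib

section
/- Let r ≥ 1 be an integer. There exists a formal power series G_r ∈ ℤ[[u_1,…,u_r]] such that g_r(b) = 1 + s_r · G_r(s_1,…,s_r) in ℤ[[b_1,…,b_r]], where the right-hand side is obtained by substituting for u_1,…,u_r the elementary symmetric polynomials s_1,…,s_r in b_1,…,b_r (each of which has zero constant term, so the substitution is well defined). -/
open MvPowerSeries Finset

/-- The unit of the power series ring `ℤ[[X_s : s ∈ σ]]` determined by a power series
with constant coefficient `1`. -/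
noncomputable def unitOf {σ : Type*} (φ : MvPowerSeries σ ℤ)
    (h : MvPowerSeries.constantCoeff φ = 1) : (MvPowerSeries σ ℤ)ˣ where
  val := φ
  inv := MvPowerSeries.invOfUnit φ 1
  val_inv := MvPowerSeries.mul_invOfUnit φ 1 (by simpa using h)
  inv_val := MvPowerSeries.invOfUnit_mul φ 1 (by simpa using h)

/-- `g_r(b) := ∏_{j=0}^r ∏_{k_1<⋯<k_j} (1 - b_{k_1} - ⋯ - b_{k_j})^{(-1)^j}`, as a unit of
`ℤ[[b_1,…,b_r]]`; the inner double product is the product over all subsets `S ⊆ {b_1,…,b_r}`. -/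
noncomputable def gr (r : ℕ) : (MvPowerSeries (Fin r) ℤ)ˣ :=
  ∏ S : Finset (Fin r),
    (unitOf (1 - ∑ k ∈ S, MvPowerSeries.X k) (by simp)) ^ ((-1 : ℤ) ^ S.card)

/-- Substitution of the elementary symmetric polynomials `s_1,…,s_r` in `b_1,…,b_r` (which
have zero constant term, so the substitution is well defined) for the variables `u_1,…,u_r`
of a power series `G ∈ ℤ[[u_1,…,u_r]]`.  The coefficient of a monomial `ν` in `G(s_1,…,s_r)`
only receives contributions from the finitely many exponent vectors `μ` with
`μ ≤ (deg ν, …, deg ν)` pointwise (the monomial `s_1^{μ_1} ⋯ s_r^{μ_r}` is homogeneous of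
degree `≥ μ_1 + ⋯ + μ_r`), so it is given by the finite sum below. -/
noncomputable def substEsymm (r : ℕ) (G : MvPowerSeries (Fin r) ℤ) :
    MvPowerSeries (Fin r) ℤ :=
  fun ν : Fin r →₀ ℕ =>
    ∑ μ ∈ Finset.Iic (Finsupp.equivFunOnFinite.symm fun _ => ν.degree),
      MvPowerSeries.coeff μ G *
        MvPolynomial.coeff ν (∏ j : Fin r, MvPolynomial.esymm (Fin r) ℤ ((j : ℕ) + 1) ^ μ j)

/-!
Setting a single variable `b_k` to `0` identifies the factors of `g_r` indexed by `S` and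
`S ∪ {k}`, which carry opposite exponents, so it sends `g_r` to `1`. Hence every monomial of
`g_r - 1` involves all the variables, i.e. `g_r = 1 + b_1 ⋯ b_r · q = 1 + s_r · q`. Permuting the
variables permutes the subsets `S` and preserves their sizes, so `g_r`, and with it `q`, is
symmetric. Each homogeneous part `q_n` of `q` is then a symmetric polynomial, hence of the form
`P_n(s_1,…,s_r)`. As `s_1^{μ_1} ⋯ s_r^{μ_r}` is homogeneous of degree `∑ j μ_j`, only the
monomials of `P_n` of that weight `n` matter, and these assemble into a single power series `G`.
-/

namespace Finset

variable {ι G : Type*} [Fintype ι] [DecidableEq ι] [CommGroup G]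

theorem prod_zpow_neg_one_pow_card_eq_one (f : Finset ι → G) (k : ι)
    (hf : ∀ S, k ∉ S → f (insert k S) = f S) :
    ∏ S : Finset ι, f S ^ ((-1 : ℤ) ^ #S) = 1 := by
  rw [← powerset_univ, ← insert_erase (mem_univ k), prod_powerset_insert (notMem_erase k univ),
    ← mul_inv_cancel (∏ S ∈ (univ.erase k).powerset, f S ^ ((-1 : ℤ) ^ #S)), ← prod_inv_distrib]
  refine congrArg _ (prod_congr rfl fun S hS => ?_)
  have hk : k ∉ S := fun h => notMem_erase k univ (mem_powerset.mp hS h)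
  rw [hf S hk, card_insert_of_notMem hk, pow_succ, mul_neg_one, zpow_neg]

end Finset

namespace MvPowerSeries

theorem coeff_equivMapDomain_of_rename_eq {σ R : Type*} [CommSemiring R]
    {e : Equiv.Perm σ} {f : MvPowerSeries σ R} (hf : rename e f = f) (ν : σ →₀ ℕ) :
    coeff (Finsupp.equivMapDomain e ν) f = coeff ν f := by
  conv_lhs => rw [← hf]
  simpa [Finsupp.embDomain_eq_mapDomain, Finsupp.equivMapDomain_eq_mapDomain]
    using coeff_embDomain_rename e.toEmbedding f ν

theorem exists_eq_monomial_mul {σ R : Type*} [Semiring R] (n : σ →₀ ℕ)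
    (f : MvPowerSeries σ R) (hf : ∀ ν, ¬ n ≤ ν → coeff ν f = 0) :
    ∃ q : MvPowerSeries σ R, f = monomial n 1 * q ∧ ∀ ν, coeff ν q = coeff (ν + n) f := by
  let q : MvPowerSeries σ R := fun ν => coeff (ν + n) f
  refine ⟨q, ?_, fun ν => rfl⟩
  ext ν
  rw [coeff_monomial_mul, one_mul]
  split_ifs with h
  · exact congrArg (coeff · f) (tsub_add_cancel_of_le h).symm
  · exact hf ν h

end MvPowerSeries

namespace MvPolynomial

variable {σ R : Type*} [CommSemiring R]

theorem isSymmetric_of_coeff_equivMapDomain {p : MvPolynomial σ R}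
    (hp : ∀ (e : Equiv.Perm σ) ν, coeff (Finsupp.equivMapDomain e ν) p = coeff ν p) :
    p.IsSymmetric := by
  intro e
  ext ν
  have hν : ν = Finsupp.mapDomain e (Finsupp.equivMapDomain e.symm ν) := by
    rw [← Finsupp.equivMapDomain_eq_mapDomain]
    ext
    simp
  conv_lhs => rw [hν]
  rw [coeff_rename_mapDomain e e.injective, hp]

variable [Fintype σ]

variable (σ R) in
theorem esymm_card_eq_monomial :
    esymm σ R (Fintype.card σ) = monomial (Finsupp.equivFunOnFinite.symm 1) 1 := by
  rw [esymm_eq_sum_monomial, ← card_univ, powersetCard_self, sum_singleton]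
  congr 2
  ext i
  simp [Finsupp.finsetSum_apply]

theorem isHomogeneous_esymm (n : ℕ) : (esymm σ R n).IsHomogeneous n := by
  rw [esymm_eq_sum_monomial]
  refine IsHomogeneous.sum _ _ _ fun t ht => isHomogeneous_monomial _ ?_
  simp [Finsupp.degree_eq_sum, (mem_powersetCard.mp ht).2]

variable (σ R) in
noncomputable def esymmPow {n : ℕ} (μ : Fin n →₀ ℕ) : MvPolynomial σ R :=
  ∏ j : Fin n, esymm σ R (j + 1) ^ μ j

theorem isHomogeneous_esymmPow {n : ℕ} (μ : Fin n →₀ ℕ) :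
    (esymmPow σ R μ).IsHomogeneous (Finsupp.weight (fun j : Fin n => (j : ℕ) + 1) μ) := by
  rw [Finsupp.weight_eq_sum]
  simp_rw [smul_eq_mul, mul_comm (μ _)]
  exact IsHomogeneous.prod _ _ _ fun j _ => (isHomogeneous_esymm _).pow _

theorem coeff_aeval_esymm {n : ℕ} (P : MvPolynomial (Fin n) R) (ν : σ →₀ ℕ) :
    coeff ν (aeval (fun j : Fin n => esymm σ R (j + 1)) P) =
      ∑ μ ∈ P.support, coeff μ P * coeff ν (esymmPow σ R μ) := by
  rw [aeval_def, eval₂_eq', coeff_sum]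
  refine sum_congr rfl fun μ _ => ?_
  rw [algebraMap_eq, coeff_C_mul, esymmPow]

end MvPolynomial

section Gr

variable {r : ℕ}

noncomputable def grFactor (r : ℕ) (S : Finset (Fin r)) : (MvPowerSeries (Fin r) ℤ)ˣ :=
  unitOf (1 - ∑ k ∈ S, X k) (by simp)

theorem map_gr {A : Type*} [CommMonoid A] (φ : MvPowerSeries (Fin r) ℤ →* A) :
    Units.map φ (gr r) = ∏ S, Units.map φ (grFactor r S) ^ ((-1 : ℤ) ^ #S) := by
  simp only [gr, grFactor, map_prod, map_zpow]

theorem rename_gr (e : Equiv.Perm (Fin r)) :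
    rename e (gr r : MvPowerSeries (Fin r) ℤ) = gr r := by
  suffices Units.map (rename (R := ℤ) e : MvPowerSeries (Fin r) ℤ →* _) (gr r) = gr r from
    congrArg Units.val this
  rw [map_gr]
  refine Fintype.prod_equiv (Equiv.finsetCongr e) _ _ fun S => ?_
  rw [Equiv.finsetCongr_apply, card_map]
  congr 1
  ext1
  simp [grFactor, unitOf, map_sum, rename_X]

theorem killCompl_gr (k : Fin r) :
    killCompl (Function.Embedding.subtype (· ≠ k)) (gr r : MvPowerSeries (Fin r) ℤ) = 1 := by
  suffices Units.map (killCompl (R := ℤ) (Function.Embedding.subtype (· ≠ k)) :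
      MvPowerSeries (Fin r) ℤ →* MvPowerSeries {i // i ≠ k} ℤ) (gr r) = 1 from
    congrArg Units.val this
  rw [map_gr]
  refine prod_zpow_neg_one_pow_card_eq_one _ k fun S hk => ?_
  ext1
  simp [grFactor, unitOf, sum_insert hk, killCompl_X_eq_zero]

theorem coeff_gr_of_apply_eq_zero {ν : Fin r →₀ ℕ} {k : Fin r} (hk : ν k = 0) :
    coeff ν (gr r : MvPowerSeries (Fin r) ℤ) = coeff ν 1 := by
  obtain ⟨μ, rfl⟩ : ν ∈ Set.range (Finsupp.embDomain (Function.Embedding.subtype (· ≠ k))) := by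
    rw [Finsupp.mem_range_embDomain_iff]
    intro i hi
    exact ⟨⟨i, fun h => Finsupp.mem_support_iff.mp hi (h ▸ hk)⟩, rfl⟩
  rw [← coeff_killCompl, killCompl_gr, ← map_one (killCompl _), coeff_killCompl]

theorem exists_symmetric_gr_eq_one_add_esymm_mul (r : ℕ) :
    ∃ q : MvPowerSeries (Fin r) ℤ,
      (gr r : MvPowerSeries (Fin r) ℤ) = 1 + (MvPolynomial.esymm (Fin r) ℤ r : _) * q ∧
        ∀ (e : Equiv.Perm (Fin r)) ν, coeff (Finsupp.equivMapDomain e ν) q = coeff ν q := by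
  obtain ⟨q, hq, hcoeff⟩ := exists_eq_monomial_mul (Finsupp.equivFunOnFinite.symm 1)
    ((gr r : MvPowerSeries (Fin r) ℤ) - 1) fun ν hν => by
      obtain ⟨k, hk⟩ : ∃ k, ν k < 1 := by simpa [Finsupp.le_def] using hν
      rw [map_sub, coeff_gr_of_apply_eq_zero (Nat.lt_one_iff.mp hk), sub_self]
  refine ⟨q, ?_, fun e ν => ?_⟩
  · have hesymm := MvPolynomial.esymm_card_eq_monomial (Fin r) ℤ
    rw [Fintype.card_fin] at hesymm
    rw [hesymm, MvPolynomial.coe_monomial, ← hq, add_sub_cancel]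
  · have hshift : Finsupp.equivMapDomain e ν + Finsupp.equivFunOnFinite.symm 1 =
        Finsupp.equivMapDomain e (ν + Finsupp.equivFunOnFinite.symm 1) := by
      ext; simp
    rw [hcoeff, hcoeff, hshift,
      coeff_equivMapDomain_of_rename_eq (by rw [map_sub, map_one, rename_gr])]

end Gr

section SubstEsymm

variable {r : ℕ}

open MvPolynomial in
theorem coeff_substEsymm_eq_coeff_aeval (G : MvPowerSeries (Fin r) ℤ)
    (P : MvPolynomial (Fin r) ℤ) (ν : Fin r →₀ ℕ)
    (h : ∀ μ, Finsupp.weight (fun j : Fin r => (j : ℕ) + 1) μ = ν.degree →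
      MvPowerSeries.coeff μ G = P.coeff μ) :
    MvPowerSeries.coeff ν (substEsymm r G) =
      coeff ν (aeval (fun j : Fin r => esymm (Fin r) ℤ (j + 1)) P) := by
  have hweight : ∀ μ, coeff ν (esymmPow (Fin r) ℤ μ) ≠ 0 →
      Finsupp.weight (fun j : Fin r => (j : ℕ) + 1) μ = ν.degree := fun μ hμ => by
    by_contra hne
    exact hμ ((isHomogeneous_esymmPow μ).coeff_eq_zero (Ne.symm hne))
  have hterm : ∀ μ, MvPowerSeries.coeff μ G * coeff ν (esymmPow (Fin r) ℤ μ) =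
      P.coeff μ * coeff ν (esymmPow (Fin r) ℤ μ) := fun μ => by
    by_cases hμ : coeff ν (esymmPow (Fin r) ℤ μ) = 0
    · simp [hμ]
    · rw [h μ (hweight μ hμ)]
  rw [coeff_aeval_esymm]
  change ∑ μ ∈ Iic _, MvPowerSeries.coeff μ G * coeff ν (esymmPow (Fin r) ℤ μ) = _
  refine sum_congr_of_eq_on_inter (fun μ _ hμ => ?_) (fun μ _ hμ => ?_) (fun μ _ _ => hterm μ)
  · rw [hterm, notMem_support_iff.mp hμ, zero_mul]
  · refine mul_eq_zero_of_right _ (not_not.mp fun hne => hμ ?_)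
    rw [mem_Iic, Finsupp.le_def]
    intro j
    simpa [← hweight μ hne] using
      Finsupp.le_weight (fun j : Fin r => (j : ℕ) + 1) (Nat.succ_ne_zero j) μ

theorem exists_substEsymm_eq (f : MvPowerSeries (Fin r) ℤ)
    (hf : ∀ (e : Equiv.Perm (Fin r)) ν, coeff (Finsupp.equivMapDomain e ν) f = coeff ν f) :
    ∃ G, substEsymm r G = f := by
  have hsymm : ∀ n, (MvPolynomial.homogeneousComponent n (truncTotal (n + 1) f)).IsSymmetric :=
    fun n => MvPolynomial.isSymmetric_of_coeff_equivMapDomain fun e ν => by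
      rw [MvPolynomial.coeff_homogeneousComponent, MvPolynomial.coeff_homogeneousComponent,
        coeff_truncTotal_eq_ite, coeff_truncTotal_eq_ite, hf, Finsupp.equivMapDomain_eq_mapDomain,
        Finsupp.degree_mapDomain]
  choose P hP using fun n =>
    MvPolynomial.esymmAlgHom_surjective ℤ (Fintype.card_fin r).le ⟨_, hsymm n⟩
  let G : MvPowerSeries (Fin r) ℤ := fun μ =>
    (P (Finsupp.weight (fun j : Fin r => (j : ℕ) + 1) μ)).coeff μ
  refine ⟨G, ?_⟩
  ext ν
  rw [coeff_substEsymm_eq_coeff_aeval _ (P ν.degree) ν fun μ hμ => by rw [← hμ]; rfl,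
    ← MvPolynomial.esymmAlgHom_apply, hP, MvPolynomial.coeff_homogeneousComponent, if_pos rfl,
    coeff_truncTotal _ (Nat.lt_succ_self _)]

end SubstEsymm

theorem gr_eq_one_add_esymm_mul_general (r : ℕ) :
    ∃ G : MvPowerSeries (Fin r) ℤ,
      (gr r : MvPowerSeries (Fin r) ℤ) =
        1 + (MvPolynomial.esymm (Fin r) ℤ r : MvPowerSeries (Fin r) ℤ) * substEsymm r G := by
  obtain ⟨q, hgr, hq⟩ := exists_symmetric_gr_eq_one_add_esymm_mul r
  obtain ⟨G, rfl⟩ := exists_substEsymm_eq q hq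
  exact ⟨G, hgr⟩

/-- For an integer `r ≥ 1` there exists a formal power series
`G_r ∈ ℤ[[u_1,…,u_r]]` such that `g_r(b) = 1 + s_r · G_r(s_1,…,s_r)` in `ℤ[[b_1,…,b_r]]`,
where `s_j` is the `j`-th elementary symmetric polynomial in `b_1,…,b_r`. -/
theorem gr_eq_one_add_esymm_mul (r : ℕ) (hr : 1 ≤ r) :
    ∃ G : MvPowerSeries (Fin r) ℤ,
      (gr r : MvPowerSeries (Fin r) ℤ) =
        1 + (MvPolynomial.esymm (Fin r) ℤ r : MvPowerSeries (Fin r) ℤ) * substEsymm r G :=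
  gr_eq_one_add_esymm_mul_general r
end

section
/- (Lemma 8.2(1)) Let n ≥ 0 and r ≥ 1 be integers, and define J_{n,r}(a,b) := F_{n,r}(a,b) · g_r(b)^{−n} in ℤ[[a_1,…,a_n,b_1,…,b_r]] (g_r has constant term 1 and so is a unit). Then J_{n,r}(a,b) − 1 is divisible by b_1 b_2 ⋯ b_r: there exists a formal power series H with J_{n,r}(a,b) − 1 = b_1 b_2 ⋯ b_r · H. -/
open MvPowerSeries Finset

/-- `F_{n,r}(a,b) := ∏_{i=1}^n ∏_{j=0}^r ∏_{k_1<⋯<k_j} (1 + a_i - b_{k_1} - ⋯ - b_{k_j})^{(-1)^j}`,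
as a unit of `ℤ[[a_1,…,a_n,b_1,…,b_r]]`; the variable `a_i` is `X (Sum.inl i)` and `b_k` is
`X (Sum.inr k)`, and the inner double product is the product over all subsets `S ⊆ {b_1,…,b_r}`. -/
noncomputable def Fseries (n r : ℕ) : (MvPowerSeries (Fin n ⊕ Fin r) ℤ)ˣ :=
  ∏ i : Fin n, ∏ S : Finset (Fin r),
    (unitOf (1 + MvPowerSeries.X (Sum.inl i) - ∑ k ∈ S, MvPowerSeries.X (Sum.inr k))
      (by simp)) ^ ((-1 : ℤ) ^ S.card)

/-- `g_r(b) := ∏_{j=0}^r ∏_{k_1<⋯<k_j} (1 - b_{k_1} - ⋯ - b_{k_j})^{(-1)^j}`, regarded as a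
unit of `ℤ[[a_1,…,a_n,b_1,…,b_r]]` (it only involves the `b`-variables `X (Sum.inr k)`). -/
noncomputable def gseries (n r : ℕ) : (MvPowerSeries (Fin n ⊕ Fin r) ℤ)ˣ :=
  ∏ S : Finset (Fin r),
    (unitOf (1 - ∑ k ∈ S, MvPowerSeries.X (Sum.inr k)) (by simp)) ^ ((-1 : ℤ) ^ S.card)


/-!
Modulo `b_k` the factors indexed by `S` and by `insert k S` coincide, and for `k ∉ S` they carry
opposite exponents; so `F_{n,r}` and `g_r`, hence `J_{n,r}`, reduce to `1` modulo every `b_k`.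
Divisibility by each of the distinct variables `b_k` gives divisibility by their product.
-/

theorem MvPowerSeries.prod_X_dvd_of_forall_X_dvd {σ R : Type*} [CommSemiring R] {s : Finset σ}
    {φ : MvPowerSeries σ R} (h : ∀ i ∈ s, (X i : MvPowerSeries σ R) ∣ φ) :
    ∏ i ∈ s, (X i : MvPowerSeries σ R) ∣ φ := by
  classical
  set e : σ →₀ ℕ := ∑ i ∈ s, Finsupp.single i 1
  have he : ∀ j, e j = if j ∈ s then 1 else 0 := by
    intro j
    simp [e, Finsupp.finsetSum_apply, Finsupp.single_apply]
  have hprod : ∏ i ∈ s, (X i : MvPowerSeries σ R) = monomial e 1 := by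
    simp only [X_def, prod_monomial, prod_const_one, e]
  refine ⟨show MvPowerSeries σ R from fun m => coeff (m + e) φ, ?_⟩
  ext m
  rw [hprod, coeff_monomial_mul]
  split_ifs with hle
  · rw [one_mul]
    exact congrArg (coeff · φ) (tsub_add_cancel_of_le hle).symm
  · obtain ⟨i, hi⟩ : ∃ i, m i < e i := by
      simpa [Finsupp.le_def] using hle
    have his : i ∈ s := by
      by_contra his
      simp [he, his] at hi
    rw [he, if_pos his] at hi
    exact X_dvd_iff.mp (h i his) m (by omega)

theorem MvPowerSeries.prod_X_comp_dvd_of_forall_X_dvd {σ ι R : Type*} [CommSemiring R]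
    {b : ι → σ} (hb : Function.Injective b) {s : Finset ι} {φ : MvPowerSeries σ R}
    (h : ∀ i ∈ s, (X (b i) : MvPowerSeries σ R) ∣ φ) :
    ∏ i ∈ s, (X (b i) : MvPowerSeries σ R) ∣ φ := by
  simpa using prod_X_dvd_of_forall_X_dvd (s := s.map ⟨b, hb⟩) (by simpa using h)

theorem Finset.prod_powerset_zpow_neg_one_pow_card_eq_one {α G : Type*} [CommGroup G]
    [DecidableEq α] {T : Finset α} {k : α} (hk : k ∈ T) (u : Finset α → G)
    (hu : ∀ S, u (insert k S) = u S) :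
    ∏ S ∈ T.powerset, u S ^ ((-1 : ℤ) ^ S.card) = 1 := by
  rw [← insert_erase hk, prod_powerset_insert (notMem_erase k T), ← prod_mul_distrib]
  refine prod_eq_one fun S hS => ?_
  have hkS : k ∉ S := fun h => notMem_erase k T (mem_powerset.mp hS h)
  rw [hu, card_insert_of_notMem hkS, pow_succ, mul_neg_one, zpow_neg, mul_inv_cancel]

theorem Ideal.Quotient.mk_span_singleton_sub_sum_insert {R ι : Type*} [CommRing R]
    [DecidableEq ι] (x : ι → R) (c : R) (k : ι) (S : Finset ι) :
    mk (span {x k}) (c - ∑ j ∈ insert k S, x j) = mk (span {x k}) (c - ∑ j ∈ S, x j) := by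
  by_cases hk : k ∈ S
  · rw [insert_eq_of_mem hk]
  · rw [sum_insert hk, map_sub, map_add, mk_singleton_self, zero_add, map_sub]

theorem map_prod_unitOf_sub_sum_X_zpow_eq_one {σ ι : Type*} [Fintype ι] [DecidableEq ι]
    (b : ι → σ) (c : MvPowerSeries σ ℤ)
    (hc : ∀ S : Finset ι, constantCoeff (c - ∑ j ∈ S, X (b j)) = 1) (k : ι) :
    Units.map (Ideal.Quotient.mk (Ideal.span {X (b k)})).toMonoidHom
      (∏ S : Finset ι, unitOf (c - ∑ j ∈ S, X (b j)) (hc S) ^ ((-1 : ℤ) ^ S.card)) = 1 := by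
  rw [map_prod, ← powerset_univ]
  simp only [map_zpow]
  exact prod_powerset_zpow_neg_one_pow_card_eq_one (mem_univ k) _ fun S =>
    Units.ext (Ideal.Quotient.mk_span_singleton_sub_sum_insert (fun j => X (b j)) c k S)

theorem Jseries_sub_one_dvd_general (n r : ℕ) :
    ∃ H : MvPowerSeries (Fin n ⊕ Fin r) ℤ,
      ((Fseries n r * gseries n r ^ (-(n : ℤ)) : (MvPowerSeries (Fin n ⊕ Fin r) ℤ)ˣ) :
          MvPowerSeries (Fin n ⊕ Fin r) ℤ) - 1 =
        (∏ k : Fin r, MvPowerSeries.X (Sum.inr k)) * H := by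
  rw [← dvd_def]
  refine prod_X_comp_dvd_of_forall_X_dvd Sum.inr_injective fun k _ => ?_
  set π := Ideal.Quotient.mk (Ideal.span {(X (Sum.inr k) : MvPowerSeries (Fin n ⊕ Fin r) ℤ)})
  have hF : Units.map π.toMonoidHom (Fseries n r) = 1 :=
    (map_prod _ _ _).trans <| prod_eq_one fun i _ =>
      map_prod_unitOf_sub_sum_X_zpow_eq_one Sum.inr (1 + X (Sum.inl i)) (fun S => by simp) k
  have hg : Units.map π.toMonoidHom (gseries n r) = 1 :=
    map_prod_unitOf_sub_sum_X_zpow_eq_one Sum.inr 1 (fun S => by simp) k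
  have hJ : Units.map π.toMonoidHom (Fseries n r * gseries n r ^ (-(n : ℤ))) = 1 := by
    rw [map_mul, map_zpow, hF, hg, one_zpow, mul_one]
  rw [← Ideal.Quotient.eq_zero_iff_dvd, map_sub, map_one, sub_eq_zero]
  exact congrArg Units.val hJ

/-- **Lemma 8.2(1).** For integers `n ≥ 0` and `r ≥ 1`, the power series
`J_{n,r}(a,b) - 1 = F_{n,r}(a,b)·g_r(b)^{-n} - 1` is divisible by `b_1 b_2 ⋯ b_r`. -/
theorem Jseries_sub_one_dvd (n r : ℕ) (hr : 1 ≤ r) :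
    ∃ H : MvPowerSeries (Fin n ⊕ Fin r) ℤ,
      ((Fseries n r * gseries n r ^ (-(n : ℤ)) : (MvPowerSeries (Fin n ⊕ Fin r) ℤ)ˣ) :
          MvPowerSeries (Fin n ⊕ Fin r) ℤ) - 1 =
        (∏ k : Fin r, MvPowerSeries.X (Sum.inr k)) * H :=
  Jseries_sub_one_dvd_general n r
end

section
/- (Well-definedness of the universal polynomial, Definition 8.3, specialized at integers) Let n ≥ 0 and r ≥ 1 be integers. For every integer m, the power series F_{n,r}(a,b) · g_r(b)^{m−n} − 1 is divisible by b_1 b_2 ⋯ b_r in ℤ[[a_1,…,a_n,b_1,…,b_r]]; in particular, the homogeneous component of total degree n + r of F_{n,r}(a,b) · g_r(b)^{m−n}, which is a polynomial in ℤ[a_1,…,a_n,b_1,…,b_r], is divisible by the monomial b_1 b_2 ⋯ b_r in that polynomial ring. -/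
open MvPowerSeries Finset

/-- The power series `F_{n,r}(a,b) · g_r(b)^{m-n}` for an integer `m`. -/
noncomputable def Fg (n r : ℕ) (m : ℤ) : MvPowerSeries (Fin n ⊕ Fin r) ℤ :=
  ((Fseries n r * gseries n r ^ (m - (n : ℤ)) : (MvPowerSeries (Fin n ⊕ Fin r) ℤ)ˣ) :
    MvPowerSeries (Fin n ⊕ Fin r) ℤ)

/-- The homogeneous component of total degree `d` of a multivariate power series in finitely
many variables, as a multivariate polynomial: the sum of `(coeff μ φ) · X^μ` over the (finitely
many) exponent vectors `μ` of total degree `d`. -/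
noncomputable def homogComponent {σ : Type*} [Fintype σ] [DecidableEq σ]
    (d : ℕ) (φ : MvPowerSeries σ ℤ) : MvPolynomial σ ℤ :=
  ∑ μ ∈ Finset.Iic (Finsupp.equivFunOnFinite.symm fun _ => d),
    if μ.degree = d then MvPolynomial.monomial μ (MvPowerSeries.coeff μ φ) else 0

/-!
Setting one variable `b_k` to zero identifies the factor indexed by `S ∪ {k}` with the factor
indexed by `S`, and these two carry opposite exponents `(-1)^|S|`. So `F_{n,r}` and `g_r`
become `1` modulo `b_k`, hence `b_k ∣ F_{n,r} g_r^{m-n} - 1` for every `k`. The variables are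
pairwise coprime in the sense that `b_k ∣ b_l ψ` forces `b_k ∣ ψ` for `k ≠ l`, so the product
`b_1 ⋯ b_r` divides as well. Consequently a monomial of positive degree that misses some `b_k`
has coefficient `0` in `F_{n,r} g_r^{m-n}`, which is the divisibility of the homogeneous component.
-/

@[simp]
theorem val_unitOf {σ : Type*} (φ : MvPowerSeries σ ℤ) (h : constantCoeff φ = 1) :
    (unitOf φ h : MvPowerSeries σ ℤ) = φ :=
  rfl

theorem Finset.prod_univ_zpow_neg_one_pow_card_eq_one {α M : Type*} [Fintype α] [DecidableEq α]
    [CommGroup M] (k : α) (u : Finset α → M) (hu : ∀ S, k ∉ S → u (insert k S) = u S) :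
    ∏ S : Finset α, u S ^ ((-1 : ℤ) ^ #S) = 1 := by
  rw [← powerset_univ, ← insert_erase (mem_univ k),
    prod_powerset_insert (notMem_erase k univ), ← prod_mul_distrib]
  refine prod_eq_one fun S hS => ?_
  have hkS : k ∉ S := fun hk => notMem_erase k univ (mem_powerset.1 hS hk)
  rw [hu S hkS, card_insert_of_notMem hkS, pow_succ, mul_neg_one, zpow_neg, mul_inv_cancel]

theorem Finsupp.sum_single_one_le_iff {σ : Type*} {T : Finset σ} {μ : σ →₀ ℕ} :
    ∑ i ∈ T, Finsupp.single i 1 ≤ μ ↔ ∀ i ∈ T, μ i ≠ 0 := by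
  classical
  simp only [le_def, finsetSum_apply, single_apply, Finset.sum_ite_eq', ne_eq]
  refine ⟨fun h i hi => ?_, fun h i => ?_⟩
  · simpa [hi, Nat.one_le_iff_ne_zero] using h i
  · split_ifs with hi
    exacts [Nat.one_le_iff_ne_zero.2 (h i hi), Nat.zero_le _]

theorem MvPolynomial.prod_X_dvd_of_coeff_eq_zero {σ R : Type*} [CommSemiring R] {T : Finset σ}
    {p : MvPolynomial σ R} (h : ∀ μ, ∀ i ∈ T, μ i = 0 → coeff μ p = 0) : ∏ i ∈ T, X i ∣ p := by
  simp only [X, ← monomial_sum_one, monomial_one_dvd_iff_modMonomial_eq_zero]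
  ext μ
  by_cases hμ : ∑ i ∈ T, Finsupp.single i 1 ≤ μ
  · simp [coeff_modMonomial_of_le _ hμ]
  · obtain ⟨i, hi, hμi⟩ := by simpa [Finsupp.sum_single_one_le_iff] using hμ
    simp [coeff_modMonomial_of_not_le _ hμ, h μ i hi hμi]

theorem coeff_homogComponent {σ : Type*} [Fintype σ] [DecidableEq σ] (d : ℕ)
    (φ : MvPowerSeries σ ℤ) (μ : σ →₀ ℕ) :
    (homogComponent d φ).coeff μ = if μ.degree = d then coeff μ φ else 0 := by
  simp only [homogComponent, MvPolynomial.coeff_sum, apply_ite (MvPolynomial.coeff μ),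
    MvPolynomial.coeff_monomial, MvPolynomial.coeff_zero]
  split_ifs with hμ
  · rw [sum_eq_single_of_mem μ (mem_Iic.2 fun s => ?_) fun ν _ hνμ => by simp [hνμ]]
    · simp [hμ]
    · simpa [hμ] using Finsupp.le_degree s μ
  · exact sum_eq_zero fun ν _ => by split_ifs <;> simp_all

namespace MvPowerSeries

variable {σ R : Type*}

theorem X_dvd_of_X_dvd_X_mul [CommSemiring R] {s t : σ} (hst : s ≠ t) {φ : MvPowerSeries σ R}
    (h : X s ∣ X t * φ) : X s ∣ φ := by
  rw [X_dvd_iff] at h ⊢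
  intro μ hμ
  have := h (Finsupp.single t 1 + μ) (by simp [hst.symm, hμ])
  rwa [X_def, coeff_add_monomial_mul, one_mul] at this

theorem X_dvd_of_X_dvd_prod_X_mul [CommSemiring R] {s : σ} {T : Finset σ} (hs : s ∉ T)
    {φ : MvPowerSeries σ R} (h : X s ∣ (∏ t ∈ T, X t) * φ) : X s ∣ φ := by
  classical
  induction T using Finset.induction_on generalizing φ with
  | empty => simpa using h
  | insert t T ht ih =>
    rw [prod_insert ht, mul_assoc] at h
    exact ih (fun h' => hs (mem_insert_of_mem h')) <|
      X_dvd_of_X_dvd_X_mul (by rintro rfl; exact hs (mem_insert_self _ T)) h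

theorem prod_X_dvd_of_forall_X_dvd_s3 [CommSemiring R] {T : Finset σ} {φ : MvPowerSeries σ R}
    (h : ∀ t ∈ T, X t ∣ φ) : ∏ t ∈ T, X t ∣ φ := by
  classical
  induction T using Finset.induction_on with
  | empty => simp
  | insert t T ht ih =>
    obtain ⟨ψ, rfl⟩ := ih fun s hs => h s (mem_insert_of_mem hs)
    rw [prod_insert ht, mul_comm (X t)]
    exact mul_dvd_mul_left _ (X_dvd_of_X_dvd_prod_X_mul ht (h t (mem_insert_self t T)))

theorem map_prod_unitOf_sub_sum_X_eq_one {ι : Type*} [Fintype ι] [DecidableEq ι] [CommRing R]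
    (f : MvPowerSeries σ ℤ →+* R) (b : ι → σ) {k : ι} (hk : f (X (b k)) = 0)
    (ψ : MvPowerSeries σ ℤ) (hψ : ∀ S : Finset ι, constantCoeff (ψ - ∑ j ∈ S, X (b j)) = 1) :
    Units.map f.toMonoidHom
        (∏ S : Finset ι, unitOf (ψ - ∑ j ∈ S, X (b j)) (hψ S) ^ ((-1 : ℤ) ^ #S)) = 1 := by
  simp only [map_prod, map_zpow]
  refine prod_univ_zpow_neg_one_pow_card_eq_one k _ fun S hkS => Units.ext ?_
  simp [sum_insert hkS, hk]

end MvPowerSeries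

section Fg

variable {n r : ℕ}

theorem map_Fseries_eq_one {R : Type*} [CommRing R] (f : MvPowerSeries (Fin n ⊕ Fin r) ℤ →+* R)
    {k : Fin r} (hk : f (X (Sum.inr k)) = 0) : Units.map f.toMonoidHom (Fseries n r) = 1 := by
  rw [Fseries, map_prod]
  exact prod_eq_one fun i _ => map_prod_unitOf_sub_sum_X_eq_one f Sum.inr hk _ _

theorem map_gseries_eq_one {R : Type*} [CommRing R] (f : MvPowerSeries (Fin n ⊕ Fin r) ℤ →+* R)
    {k : Fin r} (hk : f (X (Sum.inr k)) = 0) : Units.map f.toMonoidHom (gseries n r) = 1 :=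
  map_prod_unitOf_sub_sum_X_eq_one f Sum.inr hk _ _

theorem X_inr_dvd_Fg_sub_one (m : ℤ) (k : Fin r) : X (Sum.inr k) ∣ Fg n r m - 1 := by
  set π :=
    Ideal.Quotient.mk (Ideal.span {(X (Sum.inr k) : MvPowerSeries (Fin n ⊕ Fin r) ℤ)})
  have hk : π (X (Sum.inr k)) = 0 :=
    Ideal.Quotient.eq_zero_iff_mem.2 (Ideal.mem_span_singleton_self _)
  rw [← Ideal.mem_span_singleton, ← Ideal.Quotient.mk_eq_mk_iff_sub_mem]
  change ((Units.map π.toMonoidHom (Fseries n r * gseries n r ^ (m - n)) : _) = π 1)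
  rw [map_mul, map_zpow, map_Fseries_eq_one π hk, map_gseries_eq_one π hk]
  simp

theorem prod_X_inr_dvd_Fg_sub_one (m : ℤ) : ∏ k : Fin r, X (Sum.inr k) ∣ Fg n r m - 1 := by
  rw [← prod_image (f := X) fun k _ l _ h => Sum.inr_injective h]
  exact prod_X_dvd_of_forall_X_dvd_s3 fun t ht => by
    obtain ⟨k, -, rfl⟩ := mem_image.1 ht
    exact X_inr_dvd_Fg_sub_one m k

theorem coeff_Fg_eq_zero (m : ℤ) {μ : (Fin n ⊕ Fin r) →₀ ℕ} (hμ : μ ≠ 0) {k : Fin r}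
    (hk : μ (Sum.inr k) = 0) : coeff μ (Fg n r m) = 0 := by
  have := X_dvd_iff.1 (X_inr_dvd_Fg_sub_one m k) μ hk
  rwa [map_sub, coeff_one, if_neg hμ, sub_zero] at this

end Fg

theorem Fg_sub_one_dvd_and_homogComponent_dvd_general (n r : ℕ) (m : ℤ) :
    (∃ H : MvPowerSeries (Fin n ⊕ Fin r) ℤ,
        Fg n r m - 1 = (∏ k : Fin r, MvPowerSeries.X (Sum.inr k)) * H) ∧
      ∃ Q : MvPolynomial (Fin n ⊕ Fin r) ℤ,
        homogComponent (n + r) (Fg n r m) =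
          (∏ k : Fin r, MvPolynomial.X (Sum.inr k)) * Q := by
  refine ⟨prod_X_inr_dvd_Fg_sub_one m, ?_⟩
  rw [← prod_image (f := MvPolynomial.X) fun k _ l _ h => Sum.inr_injective h]
  refine MvPolynomial.prod_X_dvd_of_coeff_eq_zero fun μ t ht hμt => ?_
  obtain ⟨k, -, rfl⟩ := mem_image.1 ht
  rw [coeff_homogComponent, ite_eq_right_iff]
  intro hμ
  refine coeff_Fg_eq_zero m (fun h0 => ?_) hμt
  rw [h0, map_zero] at hμ
  exact k.pos.ne' (by omega)

/-- For integers `n ≥ 0`, `r ≥ 1` and every integer `m`, the power series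
`F_{n,r}(a,b)·g_r(b)^{m-n} - 1` is divisible by `b_1 ⋯ b_r` in `ℤ[[a,b]]`; in particular its
homogeneous component of total degree `n + r` is divisible by the monomial `b_1 ⋯ b_r`
in the polynomial ring `ℤ[a,b]`. -/
theorem Fg_sub_one_dvd_and_homogComponent_dvd (n r : ℕ) (hr : 1 ≤ r) (m : ℤ) :
    (∃ H : MvPowerSeries (Fin n ⊕ Fin r) ℤ,
        Fg n r m - 1 = (∏ k : Fin r, MvPowerSeries.X (Sum.inr k)) * H) ∧
      ∃ Q : MvPolynomial (Fin n ⊕ Fin r) ℤ,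
        homogComponent (n + r) (Fg n r m) =
          (∏ k : Fin r, MvPolynomial.X (Sum.inr k)) * Q :=
  Fg_sub_one_dvd_and_homogComponent_dvd_general n r m
end

section
/- (Coefficients of F_{n,r} · g_r^{t_0 − n} are numerical polynomials in t_0) Let n ≥ 0 and r ≥ 1 be integers. For every exponent vector μ ∈ ℕ^{n+r}, there exists a polynomial q_μ ∈ ℚ[x] such that for every integer m, the coefficient of the monomial a_1^{μ_1} ⋯ a_n^{μ_n} b_1^{μ_{n+1}} ⋯ b_r^{μ_{n+r}} in the power series F_{n,r}(a,b) · g_r(b)^{m−n} ∈ ℤ[[a_1,…,a_n,b_1,…,b_r]] equals q_μ(m). In particular, q_μ takes integer values at all integers. -/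
/-!
Write `g = 1 + v` with `v` of positive order. For `t ∈ ℕ` the binomial theorem gives
`[μ](φ · g ^ t) = ∑_{j ≤ |μ|} (t choose j) · [μ](φ · v ^ j)`, since `v ^ j` has order `≥ j`; this is
a polynomial in `t`. Applied to `φ · g ^ (-N)`, it makes `k ↦ [μ](φ · g ^ k)` polynomial on each
half-line `k ≥ -N`, and these polynomials all agree on `ℕ`, hence coincide.
-/

open MvPowerSeries Finset

namespace Polynomial

theorem exists_eval_natCast_eq_sum_choose_mul (c : ℕ → ℚ) (d : ℕ) :
    ∃ q : ℚ[X], ∀ t : ℕ, q.eval (t : ℚ) = ∑ j ∈ range d, (t.choose j : ℚ) * c j := by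
  refine ⟨∑ j ∈ range d, C (c j / j.factorial) * descPochhammer ℚ j, fun t ↦ ?_⟩
  simp only [eval_finsetSum, eval_mul, eval_C, descPochhammer_eval_eq_descFactorial,
    Nat.descFactorial_eq_factorial_mul_choose]
  refine sum_congr rfl fun j _ ↦ ?_
  have : (j.factorial : ℚ) ≠ 0 := by positivity
  push_cast
  field_simp

theorem exists_eval_intCast_eq_of_forall_shift (f : ℤ → ℚ)
    (hf : ∀ N : ℕ, ∃ q : ℚ[X], ∀ t : ℕ, f (t - N) = q.eval (t : ℚ)) :
    ∃ q : ℚ[X], ∀ k : ℤ, f k = q.eval (k : ℚ) := by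
  choose q hq using hf
  have hshift (N : ℕ) (k : ℤ) (hk : -N ≤ k) :
      f k = ((q N).comp (X + C (N : ℚ))).eval (k : ℚ) := by
    obtain ⟨t, ht⟩ : ∃ t : ℕ, (t : ℤ) = k + N := ⟨(k + N).toNat, by omega⟩
    rw [show k = t - N by omega, hq N t]
    simp
  have hagree (N : ℕ) : (q N).comp (X + C (N : ℚ)) = q 0 := by
    refine eq_of_infinite_eval_eq _ _ (Set.infinite_range_of_injective Nat.cast_injective |>.mono ?_)
    rintro _ ⟨t, rfl⟩
    simpa using (hshift N t (by omega)).symm.trans (hq 0 t)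
  exact ⟨q 0, fun k ↦ by rw [hshift (-k).toNat k (by omega), hagree]⟩

end Polynomial

namespace MvPowerSeries

variable {σ R : Type*} [CommSemiring R]

theorem coeff_mul_pow_eq_zero_of_degree_lt {v : MvPowerSeries σ R} (hv : constantCoeff v = 0)
    (φ : MvPowerSeries σ R) {μ : σ →₀ ℕ} {j : ℕ} (h : μ.degree < j) :
    coeff μ (φ * v ^ j) = 0 := by
  refine coeff_of_lt_order ?_
  calc (μ.degree : ℕ∞) < j := by exact_mod_cast h
    _ ≤ (v ^ j).order := le_order_pow_of_constantCoeff_eq_zero j hv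
    _ ≤ φ.order + (v ^ j).order := le_add_self
    _ ≤ (φ * v ^ j).order := le_order_mul

theorem coeff_mul_one_add_pow {v : MvPowerSeries σ R} (hv : constantCoeff v = 0)
    (φ : MvPowerSeries σ R) (μ : σ →₀ ℕ) (t : ℕ) :
    coeff μ (φ * (1 + v) ^ t) =
      ∑ j ∈ range (μ.degree + 1), t.choose j • coeff μ (φ * v ^ j) := by
  set T : ℕ → R := fun j ↦ t.choose j • coeff μ (φ * v ^ j)
  have hexpand : coeff μ (φ * (1 + v) ^ t) = ∑ j ∈ range (t + 1), T j := by
    rw [add_comm, add_pow, mul_sum, map_sum]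
    refine sum_congr rfl fun j _ ↦ ?_
    rw [one_pow, mul_one, ← nsmul_eq_mul', mul_smul_comm, map_nsmul]
  have hsub (N : ℕ) (hN : N ≤ t + μ.degree) (hT : ∀ j, N < j → T j = 0) :
      ∑ j ∈ range (N + 1), T j = ∑ j ∈ range (t + μ.degree + 1), T j :=
    sum_subset (range_subset_range.2 (by omega)) fun j _ hj ↦ hT j (by simpa using hj)
  rw [hexpand, hsub t (by omega) fun j hj ↦ by simp [T, Nat.choose_eq_zero_of_lt hj],
    hsub μ.degree (by omega) fun j hj ↦ by simp [T, coeff_mul_pow_eq_zero_of_degree_lt hv φ hj]]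

open Polynomial in
theorem exists_eval_natCast_eq_coeff_mul_one_add_pow {v : MvPowerSeries σ ℤ}
    (hv : constantCoeff v = 0) (φ : MvPowerSeries σ ℤ) (μ : σ →₀ ℕ) :
    ∃ q : ℚ[X], ∀ t : ℕ, ((coeff μ (φ * (1 + v) ^ t) : ℤ) : ℚ) = q.eval (t : ℚ) := by
  obtain ⟨q, hq⟩ := exists_eval_natCast_eq_sum_choose_mul
    (fun j ↦ ((coeff μ (φ * v ^ j) : ℤ) : ℚ)) (μ.degree + 1)
  refine ⟨q, fun t ↦ ?_⟩
  simp [hq, coeff_mul_one_add_pow hv]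

open Polynomial in
theorem exists_eval_intCast_eq_coeff_mul_zpow {G : (MvPowerSeries σ ℤ)ˣ}
    (hG : constantCoeff (G : MvPowerSeries σ ℤ) = 1) (φ : MvPowerSeries σ ℤ) (μ : σ →₀ ℕ) :
    ∃ q : ℚ[X], ∀ k : ℤ, ((coeff μ (φ * ↑(G ^ k)) : ℤ) : ℚ) = q.eval (k : ℚ) := by
  refine exists_eval_intCast_eq_of_forall_shift _ fun N ↦ ?_
  have hv : constantCoeff ((G : MvPowerSeries σ ℤ) - 1) = 0 := by simp [hG]
  obtain ⟨q, hq⟩ := exists_eval_natCast_eq_coeff_mul_one_add_pow hv (φ * ↑(G ^ (-N : ℤ))) μ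
  refine ⟨q, fun t ↦ ?_⟩
  rw [← hq, add_sub_cancel, mul_assoc, ← Units.val_pow_eq_pow_val, ← Units.val_mul, ← zpow_natCast,
    ← zpow_add, neg_add_eq_sub]

end MvPowerSeries

theorem constantCoeff_gseries (n r : ℕ) :
    constantCoeff (gseries n r : MvPowerSeries (Fin n ⊕ Fin r) ℤ) = 1 := by
  suffices Units.map (constantCoeff (σ := Fin n ⊕ Fin r) (R := ℤ)).toMonoidHom (gseries n r) = 1 by
    simpa using congrArg Units.val this
  refine (map_prod _ _ _).trans (prod_eq_one fun S _ ↦ ?_)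
  rw [map_zpow]
  convert one_zpow _
  ext
  simp [unitOf]

theorem coeff_Fg_numericalPolynomial_general (n r : ℕ) (μ : (Fin n ⊕ Fin r) →₀ ℕ) :
    ∃ q : Polynomial ℚ,
      (∀ m : ℤ, ((MvPowerSeries.coeff μ (Fg n r m) : ℤ) : ℚ) = q.eval (m : ℚ)) ∧
        ∀ m : ℤ, ∃ z : ℤ, q.eval (m : ℚ) = (z : ℚ) := by
  obtain ⟨q, hq⟩ := MvPowerSeries.exists_eval_intCast_eq_coeff_mul_zpow (constantCoeff_gseries n r)
    (Fseries n r) μ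
  have hcoeff (m : ℤ) : ((coeff μ (Fg n r m) : ℤ) : ℚ) =
      (q.comp (Polynomial.X - Polynomial.C (n : ℚ))).eval (m : ℚ) := by
    simp [Fg, hq]
  exact ⟨_, hcoeff, fun m ↦ ⟨_, (hcoeff m).symm⟩⟩

/-- For integers `n ≥ 0`, `r ≥ 1` and every exponent vector `μ`, there is a
polynomial `q = q_μ ∈ ℚ[x]` such that for every integer `m` the coefficient of the monomial
`a^μ b^μ` in `F_{n,r}(a,b)·g_r(b)^{m-n}` equals `q(m)`; in particular `q` takes integer
values at all integers. -/
theorem coeff_Fg_numericalPolynomial (n r : ℕ) (hr : 1 ≤ r) (μ : (Fin n ⊕ Fin r) →₀ ℕ) :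
    ∃ q : Polynomial ℚ,
      (∀ m : ℤ, ((MvPowerSeries.coeff μ (Fg n r m) : ℤ) : ℚ) = q.eval (m : ℚ)) ∧
        ∀ m : ℤ, ∃ z : ℤ, q.eval (m : ℚ) = (z : ℚ) :=
  coeff_Fg_numericalPolynomial_general n r μ
end
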